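/- arXiv:2510.25927 — 5 statements merged into one kernel-verified Lean document; each statement's English description precedes it below -/
import Mathlib

section
/- Let f : ℝ → ℝ be continuously differentiable. Assume (rQFC) for every λ ≥ 0 with f(λ) = 0 one has deriv f λ ≤ 0, and (genericity) whenever f(λ*) = 0 and deriv f λ* = 0 for some λ* ≥ 0, there exists ε > 0 such that f vanishes identically on the interval [λ*, λ* + ε). Then f(0) ≤ 0 implies f(λ) ≤ 0 for all λ ≥ 0. -/
/-- rQFC plus genericity implies nonpositivity propagation of the quantum expansion. -/
theorem rQFC_genericity_implies_nonpos_propagation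
    (f : ℝ → ℝ) (hf : ContDiff ℝ 1 f)
    (rQFC : ∀ l : ℝ, 0 ≤ l → f l = 0 → deriv f l ≤ 0)
    (genericity : ∀ l : ℝ, 0 ≤ l → f l = 0 → deriv f l = 0 →
      ∃ ε > 0, ∀ l' ∈ Set.Ico l (l + ε), f l' = 0)
    (h0 : f 0 ≤ 0) :
    ∀ l : ℝ, 0 ≤ l → f l ≤ 0 := by
  by_contra h
  push_neg at h
  obtain ⟨L, hL0, hfL⟩ := h
  set S : Set ℝ := {l | l ∈ Set.Icc 0 L ∧ ∀ s ∈ Set.Icc 0 l, f s ≤ 0} with hS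
  have h0S : (0:ℝ) ∈ S := by
    refine ⟨⟨le_refl 0, hL0⟩, fun s hs => ?_⟩
    have : s = 0 := le_antisymm hs.2 hs.1
    simpa [this] using h0
  have hbdd : BddAbove S := ⟨L, fun x hx => hx.1.2⟩
  set t := sSup S with ht
  have ht0 : 0 ≤ t := le_csSup hbdd h0S
  have htL : t ≤ L := csSup_le ⟨0, h0S⟩ (fun x hx => hx.1.2)
  have hcont := hf.continuous
  -- f ≤ 0 on [0, t)
  have hlt : ∀ s, 0 ≤ s → s < t → f s ≤ 0 := by
    intro s hs0 hst
    obtain ⟨x, hxS, hsx⟩ := exists_lt_of_lt_csSup ⟨0, h0S⟩ hst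
    exact hxS.2 s ⟨hs0, hsx.le⟩
  have hft : f t ≤ 0 := by
    rcases eq_or_lt_of_le ht0 with h' | h'
    · simpa [← h'] using h0
    · have hne : (nhdsWithin t (Set.Iio t)).NeBot := nhdsLT_neBot t
      have hlim : Filter.Tendsto f (nhdsWithin t (Set.Iio t)) (nhds (f t)) :=
        (hcont.continuousAt.tendsto).mono_left nhdsWithin_le_nhds
      refine le_of_tendsto hlim ?_
      filter_upwards [(eventually_gt_nhds h').filter_mono nhdsWithin_le_nhds,
        self_mem_nhdsWithin] with s hs0 hst
      exact hlt s hs0.le hst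
  have hle : ∀ s, 0 ≤ s → s ≤ t → f s ≤ 0 := fun s h1 h2 =>
    h2.lt_or_eq.elim (hlt s h1) (fun e => e ▸ hft)
  have htL' : t < L := by
    rcases lt_or_eq_of_le htL with h' | h'
    · exact h'
    · exact absurd (h' ▸ hft) (not_le.mpr hfL)
  -- obtain δ > 0 with f ≤ 0 on [t, t + δ)
  have hkey : ∃ δ > 0, ∀ s, t ≤ s → s < t + δ → f s ≤ 0 := by
    rcases hft.lt_or_eq with hneg | hzero
    · -- f t < 0 : use continuity
      have hev : ∀ᶠ s in nhds t, f s < 0 :=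
        (hcont.continuousAt).eventually_lt continuousAt_const hneg
      rcases Metric.eventually_nhds_iff.1 hev with ⟨δ, hδ, hδ'⟩
      refine ⟨δ, hδ, fun s hs1 hs2 => le_of_lt (hδ' ?_)⟩
      rw [Real.dist_eq, abs_lt]
      constructor <;> linarith
    · have hfzero : f t = 0 := hzero
      rcases (rQFC t ht0 hfzero).lt_or_eq with hd | hd
      · -- deriv f t < 0 : f strictly decreasing nearby
        have hderiv : Continuous (deriv f) := hf.continuous_deriv le_rfl
        have hev : ∀ᶠ s in nhds t, deriv f s < 0 :=
          (hderiv.continuousAt).eventually_lt continuousAt_const hd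
        rcases Metric.eventually_nhds_iff.1 hev with ⟨δ, hδ, hδ'⟩
        have hanti : StrictAntiOn f (Set.Icc t (t + δ)) := by
          refine strictAntiOn_of_deriv_neg (convex_Icc _ _) hcont.continuousOn ?_
          intro x hx
          rw [interior_Icc] at hx
          refine hδ' ?_
          rw [Real.dist_eq, abs_lt]
          constructor <;> [linarith [hx.1]; linarith [hx.2]]
        refine ⟨δ, hδ, fun s hs1 hs2 => ?_⟩
        rcases hs1.lt_or_eq with hs | hs
        · have : f s < f t := hanti ⟨le_refl t, by linarith⟩ ⟨hs1, hs2.le⟩ hs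
          linarith
        · rw [← hs]; exact hft
      · -- deriv f t = 0 : use genericity
        rcases genericity t ht0 hfzero hd with ⟨ε, hε, hε'⟩
        exact ⟨ε, hε, fun s hs1 hs2 => le_of_eq (hε' s ⟨hs1, hs2⟩)⟩
  rcases hkey with ⟨δ, hδ, hδ'⟩
  set t' := min (t + δ / 2) ((t + L) / 2) with ht'
  have htt' : t < t' := by
    apply lt_min <;> linarith
  have ht'S : t' ∈ S := by
    refine ⟨⟨by linarith, ?_⟩, fun s hs => ?_⟩
    · calc t' ≤ (t + L) / 2 := min_le_right _ _
        _ ≤ L := by linarith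
    · rcases le_or_gt s t with h' | h'
      · exact hle s hs.1 h'
      · refine hδ' s h'.le ?_
        have : t' ≤ t + δ / 2 := min_le_left _ _
        linarith [hs.2]
  exact absurd (le_csSup hbdd ht'S) (not_le.mpr htt')
end

section
/- Let Y be a nonempty type and Θ : ℝ → Y → ℝ be such that for each y ∈ Y the function λ ↦ Θ λ y is continuously differentiable. Assume (rQFC) for every y ∈ Y and every λ ≥ 0 with Θ λ y = 0 one has deriv (fun λ ↦ Θ λ y) λ ≤ 0, and (genericity) for every y ∈ Y, whenever Θ λ* y = 0 and deriv (fun λ ↦ Θ λ y) λ* = 0 for some λ* ≥ 0, there exists ε > 0 such that Θ λ y = 0 for all λ ∈ [λ*, λ* + ε). If Θ 0 y ≤ 0 for all y ∈ Y, then Θ λ y ≤ 0 for all λ ≥ 0 and all y ∈ Y. -/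
/-- Parameterized (transverse) form: rQFC plus genericity at every transverse point `y`
implies nonpositivity of the quantum expansion propagates along the deformation family. -/
theorem rQFC_genericity_implies_nonpos_propagation_param
    {Y : Type*} [Nonempty Y] (Θ : ℝ → Y → ℝ)
    (hΘ : ∀ y : Y, ContDiff ℝ 1 (fun l => Θ l y))
    (rQFC : ∀ y : Y, ∀ l : ℝ, 0 ≤ l → Θ l y = 0 → deriv (fun l => Θ l y) l ≤ 0)
    (genericity : ∀ y : Y, ∀ l : ℝ, 0 ≤ l → Θ l y = 0 →
      deriv (fun l => Θ l y) l = 0 →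
      ∃ ε > 0, ∀ l' ∈ Set.Ico l (l + ε), Θ l' y = 0)
    (h0 : ∀ y : Y, Θ 0 y ≤ 0) :
    ∀ l : ℝ, 0 ≤ l → ∀ y : Y, Θ l y ≤ 0 := by
  intro l hl y
  by_contra hpos
  push_neg at hpos
  set f : ℝ → ℝ := fun t => Θ t y with hf
  have hfc : Continuous f := (hΘ y).continuous
  have hfd : Continuous (deriv f) := (hΘ y).continuous_deriv le_rfl
  set A : Set ℝ := {t | 0 ≤ t ∧ 0 < f t} with hA
  have hAne : A.Nonempty := ⟨l, hl, hpos⟩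
  have hAbdd : BddBelow A := ⟨0, fun t ht => ht.1⟩
  set c := sInf A with hc
  have hc0 : 0 ≤ c := le_csInf hAne (fun t ht => ht.1)
  have hexists : ∀ δ > 0, ∃ a ∈ A, a < c + δ := by
    intro δ hδ
    by_contra h
    push_neg at h
    have hle : c + δ ≤ c := le_csInf hAne h
    linarith
  have hfcge : 0 ≤ f c := by
    by_contra h
    push_neg at h
    obtain ⟨δ, hδ, hball⟩ := Metric.isOpen_iff.mp (isOpen_Iio.preimage hfc) c (by simpa using h)
    obtain ⟨a, ha, halt⟩ := hexists δ hδ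
    have hac : c ≤ a := csInf_le hAbdd ha
    have hmem : a ∈ Metric.ball c δ := by
      rw [Metric.mem_ball, Real.dist_eq, abs_lt]; constructor <;> linarith
    have : f a < 0 := hball hmem
    linarith [ha.2]
  have hfcle : f c ≤ 0 := by
    rcases eq_or_lt_of_le hc0 with hzero | hcpos
    · rw [← hzero]; exact h0 y
    · by_contra h
      push_neg at h
      obtain ⟨δ, hδ, hball⟩ := Metric.isOpen_iff.mp (isOpen_Ioi.preimage hfc) c (by simpa using h)
      set x := max 0 (c - δ/2) with hx
      have hx0 : 0 ≤ x := le_max_left _ _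
      have hxlt : x < c := max_lt hcpos (by linarith)
      have hxmem : x ∈ Metric.ball c δ := by
        rw [Metric.mem_ball, Real.dist_eq, abs_lt]
        have h1 : c - δ/2 ≤ x := le_max_right _ _
        constructor <;> linarith
      have hfx : 0 < f x := hball hxmem
      have : c ≤ x := csInf_le hAbdd ⟨hx0, hfx⟩
      linarith
  have hfc0 : f c = 0 := le_antisymm hfcle hfcge
  have hderiv : deriv f c ≤ 0 := rQFC y c hc0 hfc0
  rcases lt_or_eq_of_le hderiv with hneg | hdzero
  · obtain ⟨δ, hδ, hball⟩ := Metric.isOpen_iff.mp (isOpen_Iio.preimage hfd) c (by simpa using hneg)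
    have hanti : StrictAntiOn f (Set.Icc c (c + δ/2)) := by
      apply strictAntiOn_of_deriv_neg (convex_Icc _ _) hfc.continuousOn
      intro x hx
      rw [interior_Icc] at hx
      have hxmem : x ∈ Metric.ball c δ := by
        rw [Metric.mem_ball, Real.dist_eq, abs_lt]
        constructor <;> [linarith [hx.1]; linarith [hx.2]]
      exact hball hxmem
    obtain ⟨a, ha, halt⟩ := hexists (δ/2) (by linarith)
    have hac : c ≤ a := csInf_le hAbdd ha
    have hane : c < a := by
      rcases eq_or_lt_of_le hac with rfl | h'
      · exact absurd ha.2 (by simp [hfc0])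
      · exact h'
    have hlt : f a < f c := hanti ⟨le_rfl, by linarith⟩ ⟨hac, by linarith⟩ hane
    linarith [ha.2]
  · obtain ⟨ε, hε, hzero'⟩ := genericity y c hc0 hfc0 hdzero
    obtain ⟨a, ha, halt⟩ := hexists ε hε
    have hac : c ≤ a := csInf_le hAbdd ha
    have := hzero' a ⟨hac, halt⟩
    linarith [ha.2]
end

section
/- Let f : ℝ → ℝ be continuously differentiable with f(0) ≤ 0, satisfying (rQFC) for every λ ≥ 0 with f(λ) = 0 one has deriv f λ ≤ 0, and (genericity) whenever f(λ*) = 0 and deriv f λ* = 0 for some λ* ≥ 0, there exists ε > 0 such that f vanishes identically on [λ*, λ* + ε). Let S : ℝ → ℝ be differentiable with deriv S λ = c(λ) · f(λ) for all λ ≥ 0, where c : ℝ → ℝ satisfies c(λ) > 0 for all λ ≥ 0. Then S is antitone on [0, ∞): for all 0 ≤ λ₁ ≤ λ₂ one has S(λ₂) ≤ S(λ₁). -/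
/-!
At a zero `m ≥ 0` of the quantum expansion `f`, the rQFC gives `f' m ≤ 0`. If `f' m < 0` then `f`
is negative just to the right of `m`, and if `f' m = 0` genericity makes `f` vanish just to the
right of `m`. Either way `f` cannot cross zero upwards, so by continuous induction from
`f 0 ≤ 0` it stays nonpositive on `[0, ∞)`, and `S' = c f ≤ 0` there.
-/

open Set Filter Topology

theorem le_of_forall_eventually_le_nhdsGT {α β : Type*} [ConditionallyCompleteLinearOrder α]
    [TopologicalSpace α] [OrderTopology α] [DenselyOrdered α] [LinearOrder β]
    [TopologicalSpace β] [OrderClosedTopology β] {f : α → β} {a : α} {y : β}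
    (hf : ContinuousOn f (Ici a)) (ha : f a ≤ y)
    (hy : ∀ x, a ≤ x → f x = y → ∀ᶠ z in 𝓝[>] x, f z ≤ y) :
    ∀ x, a ≤ x → f x ≤ y := by
  intro b hb
  have hclosed : IsClosed ({z | f z ≤ y} ∩ Icc a b) := by
    rw [inter_comm]
    exact (hf.mono Icc_subset_Ici_self).preimage_isClosed_of_isClosed isClosed_Icc isClosed_Iic
  refine hclosed.Icc_subset_of_forall_mem_nhdsWithin ha ?_ ⟨hb, le_rfl⟩
  rintro x ⟨hxy, hxa, -⟩
  rcases (show f x ≤ y from hxy).lt_or_eq with hlt | heq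
  · have hcont : ContinuousWithinAt f (Ioi x) x :=
      (hf x hxa).mono fun z hz ↦ hxa.trans (le_of_lt hz)
    exact (hcont.eventually (isOpen_Iio.mem_nhds hlt)).mono fun z hz ↦ le_of_lt hz
  · exact hy x hxa heq

theorem eventually_neg_nhdsGT_of_deriv_neg {f : ℝ → ℝ} {x : ℝ} (hf : deriv f x < 0)
    (hx : f x = 0) : ∀ᶠ z in 𝓝[>] x, f z < 0 := by
  filter_upwards [nhdsWithin_le_nhds (eventually_nhdsWithin_sign_eq_of_deriv_neg hf hx),
    self_mem_nhdsWithin] with z hsign hz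
  rw [sign_neg (sub_neg.mpr hz)] at hsign
  exact sign_eq_neg_one_iff.mp hsign

theorem nonpos_of_rQFC_of_genericity {f : ℝ → ℝ} (hf : Continuous f) (h0 : f 0 ≤ 0)
    (rQFC : ∀ l : ℝ, 0 ≤ l → f l = 0 → deriv f l ≤ 0)
    (genericity : ∀ l : ℝ, 0 ≤ l → f l = 0 → deriv f l = 0 →
      ∃ ε > 0, ∀ l' ∈ Ico l (l + ε), f l' = 0) :
    ∀ l, 0 ≤ l → f l ≤ 0 := by
  refine le_of_forall_eventually_le_nhdsGT hf.continuousOn h0 fun m hm hfm ↦ ?_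
  rcases (rQFC m hm hfm).lt_or_eq with hneg | hzero
  · exact (eventually_neg_nhdsGT_of_deriv_neg hneg hfm).mono fun z hz ↦ hz.le
  · obtain ⟨ε, hε, hvanish⟩ := genericity m hm hfm hzero
    filter_upwards [Ioo_mem_nhdsGT (lt_add_of_pos_right m hε)] with z hz
    exact (hvanish z (Ioo_subset_Ico_self hz)).le

/-- The generalized second law from rQFC: the generalized entropy `S`, whose derivative is
a positive multiple of the quantum expansion `f`, is antitone on `[0, ∞)`. -/
theorem gsl_from_rQFC
    (f : ℝ → ℝ) (hf : ContDiff ℝ 1 f) (h0 : f 0 ≤ 0)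
    (rQFC : ∀ l : ℝ, 0 ≤ l → f l = 0 → deriv f l ≤ 0)
    (genericity : ∀ l : ℝ, 0 ≤ l → f l = 0 → deriv f l = 0 →
      ∃ ε > 0, ∀ l' ∈ Set.Ico l (l + ε), f l' = 0)
    (S c : ℝ → ℝ) (hS : Differentiable ℝ S)
    (hSderiv : ∀ l : ℝ, 0 ≤ l → deriv S l = c l * f l)
    (hc : ∀ l : ℝ, 0 ≤ l → 0 < c l) :
    ∀ l₁ l₂ : ℝ, 0 ≤ l₁ → l₁ ≤ l₂ → S l₂ ≤ S l₁ := by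
  have hf_nonpos := nonpos_of_rQFC_of_genericity hf.continuous h0 rQFC genericity
  have hanti : AntitoneOn S (Ici 0) := by
    refine antitoneOn_of_deriv_nonpos (convex_Ici 0) hS.continuous.continuousOn
      hS.differentiableOn fun l hl ↦ ?_
    rw [interior_Ici] at hl
    rw [hSderiv l hl.le]
    exact mul_nonpos_of_nonneg_of_nonpos (hc l hl.le).le (hf_nonpos l hl.le)
  exact fun l₁ l₂ hl₁ hl ↦ hanti hl₁ (hl₁.trans hl) hl
end

section
/- Let f : ℝ → ℝ be continuously differentiable with f(0) ≤ 0 and f(1) > 0. Then there exists λ* ∈ [0, 1) with f(λ*) = 0 such that either deriv f λ* > 0, or (deriv f λ* = 0 and for every ε > 0 there exists λ ∈ (λ*, λ* + ε) with f(λ) ≠ 0). -/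
/-! The largest point `c` of `[0, 1]` with `f c ≤ 0` is a zero of `f`, after which `f` stays
positive up to `1`. So `c` is a local minimum of `f` on `[c, ∞)`, forcing `f' c ≥ 0`, and if
`f' c = 0` then `f` does not vanish on any right-neighbourhood of `c`. -/

open Set

theorem exists_zero_forall_pos_Ioc {f : ℝ → ℝ} {a b : ℝ} (hab : a ≤ b)
    (hf : ContinuousOn f (Icc a b)) (ha : f a ≤ 0) (hb : 0 < f b) :
    ∃ c ∈ Ico a b, f c = 0 ∧ ∀ x ∈ Ioc c b, 0 < f x := by
  set S := Icc a b ∩ f ⁻¹' Iic 0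
  have hS : IsClosed S := hf.preimage_isClosed_of_isClosed isClosed_Icc isClosed_Iic
  have hSne : S.Nonempty := ⟨a, ⟨le_rfl, hab⟩, ha⟩
  have hSbdd : BddAbove S := ⟨b, fun x hx => hx.1.2⟩
  obtain ⟨⟨hac, hcb⟩, hfc⟩ : sSup S ∈ S := hS.csSup_mem hSne hSbdd
  set c := sSup S
  have hpos : ∀ x ∈ Ioc c b, 0 < f x := fun x ⟨hcx, hxb⟩ =>
    not_le.mp fun hfx => hcx.not_ge (le_csSup hSbdd ⟨⟨hac.trans hcx.le, hxb⟩, hfx⟩)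
  have hcb' : c < b := hcb.lt_of_ne fun h => hfc.not_gt (h ▸ hb)
  -- A zero of `f` on `[c, b]` lies in `S`, hence at `c`.
  obtain ⟨z, ⟨hcz, hzb⟩, hfz⟩ : 0 ∈ f '' Icc c b :=
    intermediate_value_Icc hcb (hf.mono (Icc_subset_Icc_left hac)) ⟨hfc, hb.le⟩
  have hzc : z = c := le_antisymm (le_csSup hSbdd ⟨⟨hac.trans hcz, hzb⟩, hfz.le⟩) hcz
  exact ⟨c, ⟨hac, hcb'⟩, hzc ▸ hfz, hpos⟩

theorem deriv_nonneg_of_forall_Ioo_le {f : ℝ → ℝ} {c b : ℝ} (hcb : c < b)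
    (hd : DifferentiableAt ℝ f c) (hmin : ∀ x ∈ Ioo c b, f c ≤ f x) : 0 ≤ deriv f c := by
  have hloc : IsLocalMinOn f (Ici c) c := by
    filter_upwards [Ico_mem_nhdsGE hcb] with x hx
    rcases hx.1.eq_or_lt with rfl | hcx
    · exact le_rfl
    · exact hmin x ⟨hcx, hx.2⟩
  have hone : (1 : ℝ) ∈ posTangentConeAt (Ici c) c :=
    mem_posTangentConeAt_of_segment_subset <|
      (segment_subset_Icc (by simp)).trans Icc_subset_Ici_self
  simpa using hloc.hasFDerivWithinAt_nonneg hd.hasDerivAt.hasFDerivAt.hasFDerivWithinAt hone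

/-- Locating a violation: if the quantum expansion starts nonpositive but ends positive,
then at some intermediate zero either the rQFC or the genericity assumption fails. -/
theorem violation_of_rQFC_or_genericity
    (f : ℝ → ℝ) (hf : ContDiff ℝ 1 f) (h0 : f 0 ≤ 0) (h1 : 0 < f 1) :
    ∃ l ∈ Set.Ico (0 : ℝ) 1, f l = 0 ∧
      (0 < deriv f l ∨
        (deriv f l = 0 ∧ ∀ ε > 0, ∃ l' ∈ Set.Ioo l (l + ε), f l' ≠ 0)) := by
  obtain ⟨c, hc, hfc, hpos⟩ :=
    exists_zero_forall_pos_Ioc zero_le_one hf.continuous.continuousOn h0 h1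
  have hderiv : 0 ≤ deriv f c :=
    deriv_nonneg_of_forall_Ioo_le hc.2 (hf.differentiable one_ne_zero c) fun x hx =>
      hfc ▸ (hpos x ⟨hx.1, hx.2.le⟩).le
  refine ⟨c, hc, hfc, hderiv.lt_or_eq.imp_right fun h => ⟨h.symm, fun ε hε => ?_⟩⟩
  obtain ⟨x, hcx, hx⟩ := exists_between (lt_min (lt_add_of_pos_right c hε) hc.2)
  exact ⟨x, ⟨hcx, hx.trans_le (min_le_left _ _)⟩,
    (hpos x ⟨hcx, hx.le.trans (min_le_right _ _)⟩).ne'⟩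
end

section
/- Let g : ℝ → ℝ be continuously differentiable, satisfying (rQFC) for every α ≥ 0 with g(α) = 0 one has deriv g α ≤ 0, and (genericity) whenever g(α*) = 0 and deriv g α* = 0 for some α* ≥ 0, there exists ε > 0 such that g vanishes identically on [α*, α* + ε). Then g(1) > 0 implies g(0) > 0. -/
/-- Touching-lemma reduction via cross-focusing: rQFC plus genericity implies that positivity
of the quantum expansion at the end of the family forces positivity at the start. -/
theorem touching_lemma_reduction
    (g : ℝ → ℝ) (hg : ContDiff ℝ 1 g)
    (rQFC : ∀ a : ℝ, 0 ≤ a → g a = 0 → deriv g a ≤ 0)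
    (genericity : ∀ a : ℝ, 0 ≤ a → g a = 0 → deriv g a = 0 →
      ∃ ε > 0, ∀ a' ∈ Set.Ico a (a + ε), g a' = 0) :
    0 < g 1 → 0 < g 0 := by
  intro h1
  by_contra h0
  push_neg at h0
  set S : Set ℝ := {a : ℝ | a ∈ Set.Icc (0:ℝ) 1 ∧ g a ≤ 0} with hSdef
  have hS0 : (0:ℝ) ∈ S := ⟨⟨le_refl 0, zero_le_one⟩, h0⟩
  have hSne : S.Nonempty := ⟨0, hS0⟩
  have hSbdd : BddAbove S := ⟨1, fun x hx => hx.1.2⟩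
  have hSclosed : IsClosed S := by
    have hEq : S = Set.Icc (0:ℝ) 1 ∩ g ⁻¹' Set.Iic 0 := by
      ext x
      simp [hSdef, Set.mem_Icc]
    rw [hEq]
    exact isClosed_Icc.inter (isClosed_Iic.preimage hg.continuous)
  set α := sSup S with hα
  have hmem : α ∈ S := hSclosed.csSup_mem hSne hSbdd
  have hα0 : 0 ≤ α := hmem.1.1
  have hα1 : α ≤ 1 := hmem.1.2
  have hαlt : α < 1 := by
    rcases lt_or_eq_of_le hα1 with h | h
    · exact h
    · exfalso
      have := hmem.2
      rw [h] at this
      linarith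
  have key : ∃ t, α < t ∧ t ∈ S := by
    rcases lt_or_eq_of_le hmem.2 with hneg | hzero
    · -- g α < 0
      have hnb : {x : ℝ | g x < 0} ∈ nhds α :=
        hg.continuous.continuousAt.preimage_mem_nhds (Iio_mem_nhds hneg)
      rcases Metric.mem_nhds_iff.mp hnb with ⟨δ, hδ, hball⟩
      refine ⟨min (α + δ/2) ((α+1)/2), ?_, ⟨⟨?_, ?_⟩, ?_⟩⟩
      · exact lt_min (by linarith) (by linarith)
      · have := lt_min (show α < α + δ/2 by linarith) (show α < (α+1)/2 by linarith)
        linarith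
      · exact le_trans (min_le_right _ _) (by linarith)
      · have htball : min (α + δ/2) ((α+1)/2) ∈ Metric.ball α δ := by
          rw [Metric.mem_ball, Real.dist_eq, abs_lt]
          constructor
          · have := lt_min (show α < α + δ/2 by linarith) (show α < (α+1)/2 by linarith)
            linarith
          · have := min_le_left (α + δ/2) ((α+1)/2)
            linarith
        exact le_of_lt (hball htball)
    · -- g α = 0
      have hgα : g α = 0 := hzero
      have hd : deriv g α ≤ 0 := rQFC α hα0 hgα
      rcases lt_or_eq_of_le hd with hdneg | hdzero
      · -- deriv g α < 0
        have hcd : Continuous (deriv g) := hg.continuous_deriv le_rfl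
        have hnb : {x : ℝ | deriv g x < 0} ∈ nhds α :=
          hcd.continuousAt.preimage_mem_nhds (Iio_mem_nhds hdneg)
        rcases Metric.mem_nhds_iff.mp hnb with ⟨δ, hδ, hball⟩
        set t := min (α + δ/2) ((α+1)/2) with htdef
        have htα : α < t := lt_min (by linarith) (by linarith)
        have ht1 : t ≤ 1 := le_trans (min_le_right _ _) (by linarith)
        have htδ : t ≤ α + δ/2 := min_le_left _ _
        have hanti : StrictAntiOn g (Set.Icc α t) := by
          apply strictAntiOn_of_deriv_neg (convex_Icc α t) hg.continuous.continuousOn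
          intro x hx
          rw [interior_Icc] at hx
          apply hball
          rw [Metric.mem_ball, Real.dist_eq, abs_lt]
          constructor
          · linarith [hx.1]
          · linarith [hx.2]
        have hlt : g t < g α :=
          hanti ⟨le_refl α, le_of_lt htα⟩ ⟨le_of_lt htα, le_refl t⟩ htα
        exact ⟨t, htα, ⟨⟨by linarith, ht1⟩, by linarith⟩⟩
      · -- deriv g α = 0, use genericity
        obtain ⟨ε, hε, hzero'⟩ := genericity α hα0 hgα hdzero
        set t := min (α + ε/2) ((α+1)/2) with htdef
        have htα : α < t := lt_min (by linarith) (by linarith)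
        have ht1 : t ≤ 1 := le_trans (min_le_right _ _) (by linarith)
        have htε : t ≤ α + ε/2 := min_le_left _ _
        have hgt : g t = 0 := hzero' t ⟨le_of_lt htα, by linarith⟩
        exact ⟨t, htα, ⟨⟨by linarith, ht1⟩, le_of_eq hgt⟩⟩
  obtain ⟨t, ht, htS⟩ := key
  exact absurd (le_csSup hSbdd htS) (not_le.mpr ht)
end
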